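/- There is a constant C=C(K)>0 with the following property: whenever U⁺=(p⁺,v₁⁺,v₂⁺,H₁⁺,H₂⁺,S⁺) is C¹ on Ω_T, φ is C¹ on ∂Ω_T, both vanish for t<0, the boundary condition v_N⁺ = ∂₀φ − φ ∂₁v̂_N⁺ holds on {x₁=0} (with v_N⁺=v₁⁺−v₂⁺∂₂Ψ̂⁺ and ∂₀=∂_t+v̂₂⁺∂₂), and all norms below are finite, then ‖∂_tφ‖_{L²(∂Ω_T)} ≤ C( ‖U⁺‖_{L²(Ω_T)} + ‖∂₁U⁺‖_{L²(Ω_T)} + ‖φ‖_{L²(∂Ω_T)} + ‖∂₂φ‖_{L²(∂Ω_T)} ). -/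

import Mathlib

noncomputable section
open MeasureTheory

/-- Space-time points `(t, x₁, x₂)`. -/
abbrev P2 : Type := ℝ × ℝ × ℝ

/-- Directional derivative. -/
def D {E : Type*} [NormedAddCommGroup E] [NormedSpace ℝ E]
    (v : P2) (f : P2 → E) (p : P2) : E := fderiv ℝ f p v

/-- Derivative of a boundary function of `(t, x₂)`. -/
def Db (v : ℝ × ℝ) (f : ℝ × ℝ → ℝ) (q : ℝ × ℝ) : ℝ := fderiv ℝ f q v

def vIx (j : Fin 2) : Fin 6 := ⟨1 + j.1, by omega⟩
def hIx (k : Fin 2) : Fin 6 := ⟨3 + k.1, by omega⟩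

/-- The unique symmetric 6×6 matrix `N_j(H)` with quadratic form
`(N_j(H)Y,Y) = 2(y_{v_j}(y_p + (H,y_H)) − H_j(y_v,y_H))`. -/
def Nmat (H : Fin 2 → ℝ) (j : Fin 2) : Matrix (Fin 6) (Fin 6) ℝ :=
  Matrix.single 0 (vIx j) 1 + Matrix.single (vIx j) 0 1
    + ∑ k : Fin 2, (Matrix.single (vIx j) (hIx k) (H k)
        + Matrix.single (hIx k) (vIx j) (H k))
    - ∑ k : Fin 2, (Matrix.single (vIx k) (hIx k) (H j)
        + Matrix.single (hIx k) (vIx k) (H j))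

/-- Polytropic density `ρ(p,S) = A p^{1/γ} e^{−S/γ}`. -/
def rho (A γ q S : ℝ) : ℝ := A * q ^ (1 / γ) * Real.exp (-(S / γ))

/-- `A₀(U) = diag(1/(γp), ρ, ρ, 1, 1, 1)` for a polytropic gas. -/
def A0m (A γ : ℝ) (u : Fin 6 → ℝ) : Matrix (Fin 6) (Fin 6) ℝ :=
  Matrix.diagonal ![1 / (γ * u 0), rho A γ (u 0) (u 5), rho A γ (u 0) (u 5), 1, 1, 1]

def Hof (u : Fin 6 → ℝ) : Fin 2 → ℝ := fun k => u (hIx k)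

/-- `A_j(U) = v_j A₀(U) + N_j(H)`, `j = 1,2` (indexed by `Fin 2`). -/
def Am (A γ : ℝ) (j : Fin 2) (u : Fin 6 → ℝ) : Matrix (Fin 6) (Fin 6) ℝ :=
  u (vIx j) • A0m A γ u + Nmat (Hof u) j

/-- Lifting function `Ψ^s(t,x) = χ(s·x₁)φ(t,x₂)`, `s = ±1`. -/
def Psi (χ : ℝ → ℝ) (φ : ℝ × ℝ → ℝ) (s : ℝ) (p : P2) : ℝ :=
  χ (s * p.2.1) * φ (p.1, p.2.2)

/-- `Φ^s(t,x) = s·x₁ + Ψ^s(t,x)`. -/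
def Phi (χ : ℝ → ℝ) (φ : ℝ × ℝ → ℝ) (s : ℝ) (p : P2) : ℝ :=
  s * p.2.1 + Psi χ φ s p

/-- `v_N = v₁ − v₂∂₂Ψ`. -/
def vN (χ : ℝ → ℝ) (φ : ℝ × ℝ → ℝ) (s : ℝ) (W : P2 → Fin 6 → ℝ) (p : P2) : ℝ :=
  W p 1 - W p 2 * D (0, 0, 1) (Psi χ φ s) p

/-- `H_N = H₁ − H₂∂₂Ψ`. -/
def HN (χ : ℝ → ℝ) (φ : ℝ × ℝ → ℝ) (s : ℝ) (W : P2 → Fin 6 → ℝ) (p : P2) : ℝ :=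
  W p 3 - W p 4 * D (0, 0, 1) (Psi χ φ s) p

/-- `H_τ = H₁∂₂Ψ + H₂`. -/
def Hτ (χ : ℝ → ℝ) (φ : ℝ × ℝ → ℝ) (s : ℝ) (W : P2 → Fin 6 → ℝ) (p : P2) : ℝ :=
  W p 3 * D (0, 0, 1) (Psi χ φ s) p + W p 4

/-- `u = (v_N, v₂∂₁Φ)`. -/
def uvec (χ : ℝ → ℝ) (φ : ℝ × ℝ → ℝ) (s : ℝ) (W : P2 → Fin 6 → ℝ) (p : P2) : ℝ × ℝ :=
  (vN χ φ s W p, W p 2 * D (0, 1, 0) (Phi χ φ s) p)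

/-- `h = (H_N, H₂∂₁Φ)`. -/
def hvec (χ : ℝ → ℝ) (φ : ℝ × ℝ → ℝ) (s : ℝ) (W : P2 → Fin 6 → ℝ) (p : P2) : ℝ × ℝ :=
  (HN χ φ s W p, W p 4 * D (0, 1, 0) (Phi χ φ s) p)

/-- `w = u − (∂ₜΨ, 0)`. -/
def wvec (χ : ℝ → ℝ) (φ : ℝ × ℝ → ℝ) (s : ℝ) (W : P2 → Fin 6 → ℝ) (p : P2) : ℝ × ℝ :=
  ((uvec χ φ s W p).1 - D (1, 0, 0) (Psi χ φ s) p, (uvec χ φ s W p).2)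

/-- Spatial divergence of a planar vector field. -/
def div2 (F : P2 → ℝ × ℝ) (p : P2) : ℝ :=
  D (0, 1, 0) (fun q => (F q).1) p + D (0, 0, 1) (fun q => (F q).2) p

/-- The boundary matrix `Ã₁(U,Ψ) = (A₁(U) − ∂ₜΨA₀(U) − ∂₂ΨA₂(U))/∂₁Φ`. -/
def At1 (A γ : ℝ) (χ : ℝ → ℝ) (φ : ℝ × ℝ → ℝ) (s : ℝ) (u : Fin 6 → ℝ) (p : P2) :
    Matrix (Fin 6) (Fin 6) ℝ :=
  (D (0, 1, 0) (Phi χ φ s) p)⁻¹ •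
    (Am A γ 0 u - D (1, 0, 0) (Psi χ φ s) p • A0m A γ u
      - D (0, 0, 1) (Psi χ φ s) p • Am A γ 1 u)

/-- Entrywise directional derivative of a matrix-valued map in the state
variable. -/
def mdir (F : (Fin 6 → ℝ) → Matrix (Fin 6) (Fin 6) ℝ) (u Y : Fin 6 → ℝ) :
    Matrix (Fin 6) (Fin 6) ℝ :=
  Matrix.of fun i j => fderiv ℝ (fun w => F w i j) u Y

/-- The zero-order operator `𝒞(Û,Ψ̂)` of the linearized problem. -/
def Cop (A γ : ℝ) (χ : ℝ → ℝ) (φ : ℝ × ℝ → ℝ) (s : ℝ) (W : P2 → Fin 6 → ℝ)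
    (p : P2) (Y : Fin 6 → ℝ) : Fin 6 → ℝ :=
  (mdir (A0m A γ) (W p) Y).mulVec (D (1, 0, 0) W p)
    + (mdir (fun w => At1 A γ χ φ s w p) (W p) Y).mulVec (D (0, 1, 0) W p)
    + (mdir (Am A γ 1) (W p) Y).mulVec (D (0, 0, 1) W p)

/-- The full linearized interior operator. -/
def Lop (A γ : ℝ) (χ : ℝ → ℝ) (φ : ℝ × ℝ → ℝ) (s : ℝ) (W U : P2 → Fin 6 → ℝ)
    (p : P2) : Fin 6 → ℝ :=
  (A0m A γ (W p)).mulVec (D (1, 0, 0) U p)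
    + (At1 A γ χ φ s (W p) p).mulVec (D (0, 1, 0) U p)
    + (Am A γ 1 (W p)).mulVec (D (0, 0, 1) U p)
    + Cop A γ χ φ s W p (U p)

/-- `Ω_t = (−∞,t] × ℝ²₊`. -/
def ΩT (t : ℝ) : Set P2 := {p | p.1 ≤ t ∧ 0 < p.2.1}

/-- The boundary `(−∞,t] × {x₁=0} × ℝ`, parametrized by `(t,x₂)`. -/
def bT (t : ℝ) : Set (ℝ × ℝ) := {q | q.1 ≤ t}

/-- The hplane `ℝ²₊`. -/
def hplane : Set (ℝ × ℝ) := {x | 0 < x.1}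

/-- Squared `L²(S)` norm of an `ℝ⁶`-valued function. -/
def L2V (S : Set P2) (U : P2 → Fin 6 → ℝ) : ℝ := ∫ p in S, ∑ i, (U p i) ^ 2

/-- Squared `L²(S)` norm of a scalar function. -/
def L2R (S : Set P2) (f : P2 → ℝ) : ℝ := ∫ p in S, (f p) ^ 2

/-- Squared `H¹(Ω_T)` norm of an `ℝ⁶`-valued function. -/
def H1V (T : ℝ) (U : P2 → Fin 6 → ℝ) : ℝ :=
  L2V (ΩT T) U + L2V (ΩT T) (D (1, 0, 0) U) + L2V (ΩT T) (D (0, 1, 0) U)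
    + L2V (ΩT T) (D (0, 0, 1) U)

/-- Squared `L²` norm over the boundary strip. -/
def L2B (T : ℝ) (f : ℝ × ℝ → ℝ) : ℝ := ∫ q in bT T, (f q) ^ 2

/-- Squared `H¹` norm over the boundary strip. -/
def H1B (T : ℝ) (f : ℝ × ℝ → ℝ) : ℝ :=
  L2B T f + L2B T (Db (1, 0) f) + L2B T (Db (0, 1) f)

/-- Squared `L²(ℝ²₊)` norm of an `ℝ⁶`-valued function at time `t`. -/
def L2slV (U : P2 → Fin 6 → ℝ) (t : ℝ) : ℝ := ∫ x in hplane, ∑ i, (U (t, x) i) ^ 2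

/-- Squared `L²(ℝ²₊)` norm of a scalar function at time `t`. -/
def L2slR (f : P2 → ℝ) (t : ℝ) : ℝ := ∫ x in hplane, (f (t, x)) ^ 2

/-- Hypotheses on the cut-off function `χ`. -/
def ChiHyp (χ : ℝ → ℝ) : Prop :=
  ContDiff ℝ (⊤ : ℕ∞) χ ∧ HasCompactSupport χ ∧
    (∀ x ∈ Set.Icc (-1 : ℝ) 1, χ x = 1) ∧ (∀ x, |deriv χ x| < 1 / 2)

/-- Regularity and `K`-boundedness of the basic state `(Û⁺,Û⁻,φ̂)`. -/
def StateReg (K : ℝ) (Up Um : P2 → Fin 6 → ℝ) (φh : ℝ × ℝ → ℝ) : Prop :=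
  ContDiff ℝ (⊤ : ℕ∞) Up ∧ ContDiff ℝ (⊤ : ℕ∞) Um ∧ ContDiff ℝ (⊤ : ℕ∞) φh ∧
    (∀ n : ℕ, n ≤ 2 → ∀ p, ‖iteratedFDeriv ℝ n Up p‖ ≤ K) ∧
    (∀ n : ℕ, n ≤ 2 → ∀ p, ‖iteratedFDeriv ℝ n Um p‖ ≤ K) ∧
    (∀ n : ℕ, n ≤ 3 → ∀ q, ‖iteratedFDeriv ℝ n φh q‖ ≤ K) ∧
    (∀ q, |φh q| < 1)

/-- (H1): hyperbolicity bounds on the basic state. -/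
def H1hyp (A γ ρ0 p0 T : ℝ) (Up Um : P2 → Fin 6 → ℝ) : Prop :=
  ∀ p ∈ ΩT T, ρ0 ≤ rho A γ (Up p 0) (Up p 5) ∧ ρ0 ≤ rho A γ (Um p 0) (Um p 5) ∧
    p0 ≤ Up p 0 ∧ p0 ≤ Um p 0

/-- (H2): the Rankine–Hugoniot boundary conditions for the basic state. -/
def H2hyp (T : ℝ) (χ : ℝ → ℝ) (φh : ℝ × ℝ → ℝ) (Up Um : P2 → Fin 6 → ℝ) : Prop :=
  ∀ t x₂ : ℝ, t ≤ T →
    Up (t, 0, x₂) 0 = Um (t, 0, x₂) 0 ∧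
    Up (t, 0, x₂) 1 = Um (t, 0, x₂) 1 ∧
    Up (t, 0, x₂) 2 = Um (t, 0, x₂) 2 ∧
    Hτ χ φh 1 Up (t, 0, x₂) = Hτ χ φh (-1) Um (t, 0, x₂) ∧
    Db (1, 0) φh (t, x₂) = vN χ φh 1 Up (t, 0, x₂)

/-- (H3): the normal magnetic field does not vanish on the boundary. -/
def H3hyp (κ0 T : ℝ) (χ : ℝ → ℝ) (φh : ℝ × ℝ → ℝ) (Up Um : P2 → Fin 6 → ℝ) : Prop :=
  ∀ t x₂ : ℝ, t ≤ T →
    κ0 ≤ |HN χ φh 1 Up (t, 0, x₂)| ∧ κ0 ≤ |HN χ φh (-1) Um (t, 0, x₂)|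

/-- (H4): the induction equations hold for the basic state. -/
def H4hyp (T : ℝ) (χ : ℝ → ℝ) (φh : ℝ × ℝ → ℝ) (Up Um : P2 → Fin 6 → ℝ) : Prop :=
  ∀ (W : P2 → Fin 6 → ℝ) (s : ℝ), (W = Up ∧ s = 1) ∨ (W = Um ∧ s = -1) →
    ∀ p ∈ ΩT T, ∀ k : Fin 2,
      D (1, 0, 0) (fun q => W q (hIx k)) p +
        (D (0, 1, 0) (Phi χ φh s) p)⁻¹ *
          ((wvec χ φh s W p).1 * D (0, 1, 0) (fun q => W q (hIx k)) p
            + (wvec χ φh s W p).2 * D (0, 0, 1) (fun q => W q (hIx k)) p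
            - (hvec χ φh s W p).1 * D (0, 1, 0) (fun q => W q (vIx k)) p
            - (hvec χ φh s W p).2 * D (0, 0, 1) (fun q => W q (vIx k)) p
            + W p (hIx k) * div2 (uvec χ φh s W) p) = 0

/-- (H5): divergence and jump constraints for the basic state at `t ≤ 0`. -/
def H5hyp (χ : ℝ → ℝ) (φh : ℝ × ℝ → ℝ) (Up Um : P2 → Fin 6 → ℝ) : Prop :=
  (∀ p : P2, p.1 ≤ 0 → 0 < p.2.1 →
    div2 (hvec χ φh 1 Up) p = 0 ∧ div2 (hvec χ φh (-1) Um) p = 0) ∧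
  (∀ t x₂ : ℝ, t ≤ 0 → HN χ φh 1 Up (t, 0, x₂) = HN χ φh (-1) Um (t, 0, x₂))

/-- (H6): `[∂₁v̂_N] = 0`. -/
def H6hyp (T : ℝ) (χ : ℝ → ℝ) (φh : ℝ × ℝ → ℝ) (Up Um : P2 → Fin 6 → ℝ) : Prop :=
  ∀ t x₂ : ℝ, t ≤ T →
    D (0, 1, 0) (vN χ φh 1 Up) (t, 0, x₂) + D (0, 1, 0) (vN χ φh (-1) Um) (t, 0, x₂) = 0

/-!
On the boundary `x₁ = 0` the lifting `Ψ̂⁺` coincides with `φ̂` (since `χ ≡ 1` near `0`), so the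
boundary condition can be solved for the time derivative:
`∂ₜφ = v₁⁺ − ∂₂φ̂ v₂⁺ − v̂₂⁺ ∂₂φ + (∂₁v̂₁⁺ − ∂₂φ̂ ∂₁v̂₂⁺) φ`, with coefficients bounded by `K + K²`.
Hence `(∂ₜφ)²` is bounded pointwise by the trace `|U⁺(t, 0, x₂)|²` plus `φ²` and `(∂₂φ)²`.
The trace is controlled by the one-dimensional inequality `u(0)² ≤ ∫₀^∞ (u² + u'²)`,
which holds because `u²` and `(u²)' = 2uu'` are integrable on `(0, ∞)`, so `u(0)² = -∫₀^∞ (u²)'`;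
integrating over the boundary with Fubini gives the estimate.
-/

open Set Filter Topology

lemma sum_sq_le_integral_Ioi {ι : Type*} [Fintype ι] {u u' : ℝ → ι → ℝ} {a : ℝ}
    (hu : ∀ x ∈ Ici a, HasDerivAt u (u' x) x) (hu' : ContinuousOn u' (Ici a))
    (hi : IntegrableOn (fun x => ∑ i, u x i ^ 2) (Ioi a))
    (hi' : IntegrableOn (fun x => ∑ i, u' x i ^ 2) (Ioi a)) :
    ∑ i, u a i ^ 2 ≤ (∫ x in Ioi a, ∑ i, u x i ^ 2) + ∫ x in Ioi a, ∑ i, u' x i ^ 2 := by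
  set g' : ℝ → ℝ := fun x => ∑ i, 2 * u x i * u' x i
  have hg : ∀ x ∈ Ici a, HasDerivAt (fun x => ∑ i, u x i ^ 2) (g' x) x := fun x hx => by
    simpa [g', mul_comm, mul_left_comm] using
      HasDerivAt.fun_sum fun i _ => ((hasDerivAt_pi.mp (hu x hx) i).fun_pow 2)
  have hu_cont : ContinuousOn u (Ici a) := fun x hx => (hu x hx).continuousAt.continuousWithinAt
  have hg'_le : ∀ x, |g' x| ≤ ∑ i, u x i ^ 2 + ∑ i, u' x i ^ 2 := fun x => by
    rw [← Finset.sum_add_distrib]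
    refine (Finset.abs_sum_le_sum_abs _ _).trans (Finset.sum_le_sum fun i _ => ?_)
    rw [abs_le]; constructor <;> nlinarith [sq_nonneg (u x i + u' x i), sq_nonneg (u x i - u' x i)]
  have hg'_int : IntegrableOn g' (Ioi a) := by
    refine (hi.add hi').mono' ?_
      (Eventually.of_forall fun x => (Real.norm_eq_abs _).trans_le (hg'_le x))
    refine ContinuousOn.aestronglyMeasurable ?_ measurableSet_Ioi
    refine (continuousOn_finsetSum _ fun i _ => ?_).mono Ioi_subset_Ici_self
    exact (continuousOn_const.mul ((continuous_apply i).comp_continuousOn hu_cont)).mul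
      ((continuous_apply i).comp_continuousOn hu')
  have hlim := tendsto_zero_of_hasDerivAt_of_integrableOn_Ioi
    (fun x hx => hg x (mem_Ici_of_Ioi hx)) hg'_int hi
  have hFTC := integral_Ioi_of_hasDerivAt_of_tendsto' hg hg'_int hlim
  calc ∑ i, u a i ^ 2 = ∫ x in Ioi a, -g' x := by rw [integral_neg, hFTC]; ring
    _ ≤ ∫ x in Ioi a, (∑ i, u x i ^ 2 + ∑ i, u' x i ^ 2) :=
        setIntegral_mono hg'_int.neg (hi.add hi') fun x => (neg_le_abs _).trans (hg'_le x)
    _ = _ := integral_add hi hi'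

def normalLast : P2 ≃ᵐ (ℝ × ℝ) × ℝ :=
  ((MeasurableEquiv.refl ℝ).prodCongr MeasurableEquiv.prodComm).trans
    MeasurableEquiv.prodAssoc.symm

@[simp] lemma normalLast_apply (p : P2) : normalLast p = ((p.1, p.2.2), p.2.1) := rfl

lemma measurePreserving_normalLast : MeasurePreserving normalLast := by
  refine (volume_preserving_prodAssoc.symm _).comp ?_
  rw [Measure.volume_eq_prod, Measure.volume_eq_prod (α := ℝ) (β := ℝ)]
  exact (MeasurePreserving.id volume).prod Measure.measurePreserving_swap

lemma normalLast_preimage (T : ℝ) : normalLast ⁻¹' (bT T ×ˢ Ioi 0) = ΩT T := by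
  ext p
  simp [bT, ΩT]

lemma measurableSet_bT (T : ℝ) : MeasurableSet (bT T) :=
  measurableSet_le measurable_fst measurable_const

lemma integrable_prod_of_integrableOn_ΩT {T : ℝ} {F : P2 → ℝ} (hF : IntegrableOn F (ΩT T)) :
    Integrable (fun z : (ℝ × ℝ) × ℝ => F (z.1.1, z.2, z.1.2))
      ((volume.restrict (bT T)).prod (volume.restrict (Ioi 0))) := by
  have h := (measurePreserving_normalLast.restrict_preimage_emb
    normalLast.measurableEmbedding (bT T ×ˢ Ioi 0)).integrable_comp_emb
    normalLast.measurableEmbedding (g := fun z => F (z.1.1, z.2, z.1.2))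
  rw [normalLast_preimage] at h
  rw [Measure.prod_restrict, ← Measure.volume_eq_prod]
  exact h.mp hF

lemma integral_bT_integral_Ioi {T : ℝ} {F : P2 → ℝ} (hF : IntegrableOn F (ΩT T)) :
    ∫ q in bT T, ∫ x₁ in Ioi 0, F (q.1, x₁, q.2) = ∫ p in ΩT T, F p := by
  have h := integrable_prod_of_integrableOn_ΩT hF
  rw [Measure.prod_restrict, ← Measure.volume_eq_prod] at h
  have h' := measurePreserving_normalLast.setIntegral_preimage_emb
    normalLast.measurableEmbedding (fun z => F (z.1.1, z.2, z.1.2)) (bT T ×ˢ Ioi 0)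
  rw [normalLast_preimage] at h'
  rw [← setIntegral_prod _ h, ← Measure.volume_eq_prod, ← h']
  rfl

section Trace

variable {ι : Type*} [Fintype ι] {U : P2 → ι → ℝ}

lemma sum_sq_boundary_le_integral_Ioi (hU : ContDiff ℝ 1 U) (t x₂ : ℝ)
    (h0 : IntegrableOn (fun x₁ => ∑ i, U (t, x₁, x₂) i ^ 2) (Ioi 0))
    (h1 : IntegrableOn (fun x₁ => ∑ i, D (0, 1, 0) U (t, x₁, x₂) i ^ 2) (Ioi 0)) :
    ∑ i, U (t, 0, x₂) i ^ 2 ≤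
      (∫ x₁ in Ioi 0, ∑ i, U (t, x₁, x₂) i ^ 2)
        + ∫ x₁ in Ioi 0, ∑ i, D (0, 1, 0) U (t, x₁, x₂) i ^ 2 := by
  have hline : Continuous fun x₁ : ℝ => ((t, x₁, x₂) : P2) := by fun_prop
  refine sum_sq_le_integral_Ioi (fun x₁ _ => ?_) ?_ h0 h1
  · exact (hU.differentiable one_ne_zero _).hasFDerivAt.comp_hasDerivAt x₁
      ((hasDerivAt_const x₁ t).prodMk ((hasDerivAt_id x₁).prodMk (hasDerivAt_const x₁ x₂)))
  · exact (((hU.continuous_fderiv one_ne_zero).comp hline).clm_apply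
      continuous_const).continuousOn

lemma integrableOn_bT_trace_and_integral_le {T : ℝ} (hU : ContDiff ℝ 1 U)
    (h0 : IntegrableOn (fun p => ∑ i, U p i ^ 2) (ΩT T))
    (h1 : IntegrableOn (fun p => ∑ i, D (0, 1, 0) U p i ^ 2) (ΩT T)) :
    IntegrableOn (fun q : ℝ × ℝ => ∑ i, U (q.1, 0, q.2) i ^ 2) (bT T) ∧
      ∫ q in bT T, ∑ i, U (q.1, 0, q.2) i ^ 2 ≤
        (∫ p in ΩT T, ∑ i, U p i ^ 2) + ∫ p in ΩT T, ∑ i, D (0, 1, 0) U p i ^ 2 := by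
  have G0 := integrable_prod_of_integrableOn_ΩT h0
  have G1 := integrable_prod_of_integrableOn_ΩT h1
  have hslices : Integrable (fun q : ℝ × ℝ => (∫ x₁ in Ioi 0, ∑ i, U (q.1, x₁, q.2) i ^ 2)
      + ∫ x₁ in Ioi 0, ∑ i, D (0, 1, 0) U (q.1, x₁, q.2) i ^ 2) (volume.restrict (bT T)) :=
    G0.integral_prod_left.add G1.integral_prod_left
  have hle : ∀ᵐ q ∂volume.restrict (bT T), ∑ i, U (q.1, 0, q.2) i ^ 2 ≤
      (∫ x₁ in Ioi 0, ∑ i, U (q.1, x₁, q.2) i ^ 2)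
        + ∫ x₁ in Ioi 0, ∑ i, D (0, 1, 0) U (q.1, x₁, q.2) i ^ 2 := by
    filter_upwards [G0.prod_right_ae, G1.prod_right_ae] with q hq0 hq1
    exact sum_sq_boundary_le_integral_Ioi hU q.1 q.2 hq0 hq1
  have htrace : IntegrableOn (fun q : ℝ × ℝ => ∑ i, U (q.1, 0, q.2) i ^ 2) (bT T) := by
    refine hslices.mono' (Continuous.aestronglyMeasurable ?_) (hle.mono fun q hq => ?_)
    · have := hU.continuous
      fun_prop
    · rwa [Real.norm_of_nonneg (by positivity)]
  refine ⟨htrace, (integral_mono_ae htrace hslices hle).trans_eq ?_⟩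
  rw [integral_add G0.integral_prod_left G1.integral_prod_left, integral_bT_integral_Ioi h0,
    integral_bT_integral_Ioi h1]

end Trace

def boundaryProj : P2 →L[ℝ] ℝ × ℝ :=
  (ContinuousLinearMap.fst ℝ ℝ (ℝ × ℝ)).prod
    ((ContinuousLinearMap.snd ℝ ℝ ℝ).comp (ContinuousLinearMap.snd ℝ ℝ (ℝ × ℝ)))

@[simp] lemma boundaryProj_apply (p : P2) : boundaryProj p = (p.1, p.2.2) := rfl

section Boundary

variable {χ : ℝ → ℝ} {φ : ℝ × ℝ → ℝ}

lemma Psi_eventuallyEq_nhds_boundary (hχ : ∀ x ∈ Icc (-1 : ℝ) 1, χ x = 1) (s t x₂ : ℝ) :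
    ∀ᶠ q in 𝓝 ((t, 0, x₂) : P2), Psi χ φ s =ᶠ[𝓝 q] fun r => φ (boundaryProj r) := by
  have hcont : Continuous fun q : P2 => s * q.2.1 := by fun_prop
  have hmem : ∀ᶠ q in 𝓝 ((t, 0, x₂) : P2), s * q.2.1 ∈ Icc (-1 : ℝ) 1 :=
    hcont.continuousAt.eventually_mem (Icc_mem_nhds (by norm_num) (by norm_num))
  refine hmem.eventually_nhds.mono fun q hq => hq.mono fun r hr => ?_
  simp [Psi, hχ _ hr]

lemma D_Psi_eventuallyEq_boundary (hχ : ∀ x ∈ Icc (-1 : ℝ) 1, χ x = 1)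
    (hφ : Differentiable ℝ φ) (s t x₂ : ℝ) :
    ∀ᶠ q in 𝓝 ((t, 0, x₂) : P2), D (0, 0, 1) (Psi χ φ s) q = Db (0, 1) φ (q.1, q.2.2) := by
  filter_upwards [Psi_eventuallyEq_nhds_boundary (φ := φ) hχ s t x₂] with q hq
  rw [D, hq.fderiv_eq, fderiv_fun_comp q (hφ _) boundaryProj.differentiableAt, boundaryProj.fderiv]
  rfl

lemma vN_eventuallyEq_boundary (hχ : ∀ x ∈ Icc (-1 : ℝ) 1, χ x = 1)
    (hφ : Differentiable ℝ φ) (s t x₂ : ℝ) (W : P2 → Fin 6 → ℝ) :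
    vN χ φ s W =ᶠ[𝓝 ((t, 0, x₂) : P2)]
      fun q => W q 1 - W q 2 * Db (0, 1) φ (boundaryProj q) := by
  filter_upwards [D_Psi_eventuallyEq_boundary hχ hφ s t x₂] with q hq
  rw [vN, hq, boundaryProj_apply]

lemma vN_boundary (hχ : ∀ x ∈ Icc (-1 : ℝ) 1, χ x = 1) (hφ : Differentiable ℝ φ)
    (s t x₂ : ℝ) (W : P2 → Fin 6 → ℝ) :
    vN χ φ s W (t, 0, x₂) = W (t, 0, x₂) 1 - W (t, 0, x₂) 2 * Db (0, 1) φ (t, x₂) :=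
  (vN_eventuallyEq_boundary hχ hφ s t x₂ W).eq_of_nhds

lemma D_vN_boundary (hχ : ∀ x ∈ Icc (-1 : ℝ) 1, χ x = 1) (hφ : ContDiff ℝ 2 φ)
    (s t x₂ : ℝ) {W : P2 → Fin 6 → ℝ} (hW : DifferentiableAt ℝ W (t, 0, x₂)) :
    D (0, 1, 0) (vN χ φ s W) (t, 0, x₂) =
      D (0, 1, 0) W (t, 0, x₂) 1 - Db (0, 1) φ (t, x₂) * D (0, 1, 0) W (t, 0, x₂) 2 := by
  have hφ' : Differentiable ℝ (Db (0, 1) φ) := fun q =>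
    ((hφ.fderiv_right (m := 1) (by norm_num)).differentiable one_ne_zero q).clm_apply
      (differentiableAt_const _)
  rw [D, (vN_eventuallyEq_boundary hχ (hφ.differentiable (by norm_num)) s t x₂ W).fderiv_eq]
  have hW_i (i : Fin 6) : HasFDerivAt (fun q => W q i)
      ((ContinuousLinearMap.proj i).comp (fderiv ℝ W (t, 0, x₂))) (t, 0, x₂) :=
    hasFDerivAt_pi'.mp hW.hasFDerivAt i
  have hc : HasFDerivAt (fun q => Db (0, 1) φ (boundaryProj q))
      ((fderiv ℝ (Db (0, 1) φ) (boundaryProj (t, 0, x₂))).comp boundaryProj) (t, 0, x₂) :=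
    (hφ' _).hasFDerivAt.comp _ boundaryProj.hasFDerivAt
  rw [((hW_i 1).fun_sub ((hW_i 2).fun_mul hc)).fderiv]
  simp [D, Db, Prod.mk_zero_zero]

end Boundary

lemma sq_sub_sub_add_le {K L u₁ u₂ g b d a f : ℝ} (hg : |g| ≤ K) (hb : |b| ≤ K) (ha : |a| ≤ L) :
    (u₁ - g * u₂ - b * d + a * f) ^ 2 ≤
      4 * (1 + K ^ 2 + L ^ 2) * (u₁ ^ 2 + u₂ ^ 2 + f ^ 2 + d ^ 2) := by
  have hmul {c M : ℝ} (x : ℝ) (hc : |c| ≤ M) : (c * x) ^ 2 ≤ M ^ 2 * x ^ 2 := by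
    rw [mul_pow]
    exact mul_le_mul_of_nonneg_right (sq_le_sq' (neg_le_of_abs_le hc) (le_of_abs_le hc))
      (sq_nonneg x)
  calc (u₁ - g * u₂ - b * d + a * f) ^ 2
      ≤ 4 * (u₁ ^ 2 + (g * u₂) ^ 2 + (b * d) ^ 2 + (a * f) ^ 2) := by
        nlinarith [sq_nonneg (u₁ + g * u₂), sq_nonneg (u₁ + b * d), sq_nonneg (u₁ - a * f),
          sq_nonneg (g * u₂ - b * d), sq_nonneg (g * u₂ + a * f), sq_nonneg (b * d + a * f)]
    _ ≤ 4 * (u₁ ^ 2 + K ^ 2 * u₂ ^ 2 + K ^ 2 * d ^ 2 + L ^ 2 * f ^ 2) := by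
        gcongr
        exacts [hmul u₂ hg, hmul d hb, hmul f ha]
    _ ≤ _ := by
        nlinarith [mul_nonneg (sq_nonneg K) (sq_nonneg u₁),
          mul_nonneg (sq_nonneg L) (sq_nonneg u₁), mul_nonneg (sq_nonneg L) (sq_nonneg u₂),
          mul_nonneg (sq_nonneg K) (sq_nonneg f), mul_nonneg (sq_nonneg L) (sq_nonneg d),
          mul_nonneg (sq_nonneg K) (sq_nonneg d), mul_nonneg (sq_nonneg K) (sq_nonneg u₂),
          sq_nonneg u₂, sq_nonneg f, sq_nonneg d]

section FrontBound

variable {K : ℝ} {χ : ℝ → ℝ} {φh φ : ℝ × ℝ → ℝ} {Up Um Ud : P2 → Fin 6 → ℝ} {t x₂ : ℝ}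

lemma Db_time_eq_of_boundary_condition (hχ : ∀ x ∈ Icc (-1 : ℝ) 1, χ x = 1)
    (hφh : ContDiff ℝ 2 φh) (hUp : DifferentiableAt ℝ Up (t, 0, x₂))
    (hbc : vN χ φh 1 Ud (t, 0, x₂) =
      (Db (1, 0) φ (t, x₂) + Up (t, 0, x₂) 2 * Db (0, 1) φ (t, x₂))
        - φ (t, x₂) * D (0, 1, 0) (vN χ φh 1 Up) (t, 0, x₂)) :
    Db (1, 0) φ (t, x₂) =
      Ud (t, 0, x₂) 1 - Db (0, 1) φh (t, x₂) * Ud (t, 0, x₂) 2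
        - Up (t, 0, x₂) 2 * Db (0, 1) φ (t, x₂)
        + (D (0, 1, 0) Up (t, 0, x₂) 1 - Db (0, 1) φh (t, x₂) * D (0, 1, 0) Up (t, 0, x₂) 2)
          * φ (t, x₂) := by
  rw [vN_boundary hχ (hφh.differentiable two_ne_zero), D_vN_boundary hχ hφh 1 t x₂ hUp] at hbc
  linarith

lemma sq_Db_time_le_of_boundary_condition (hχ : ∀ x ∈ Icc (-1 : ℝ) 1, χ x = 1)
    (hreg : StateReg K Up Um φh)
    (hbc : vN χ φh 1 Ud (t, 0, x₂) =
      (Db (1, 0) φ (t, x₂) + Up (t, 0, x₂) 2 * Db (0, 1) φ (t, x₂))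
        - φ (t, x₂) * D (0, 1, 0) (vN χ φh 1 Up) (t, 0, x₂)) :
    Db (1, 0) φ (t, x₂) ^ 2 ≤ 4 * (1 + K ^ 2 + (K + K * K) ^ 2) *
      (∑ i, Ud (t, 0, x₂) i ^ 2 + φ (t, x₂) ^ 2 + Db (0, 1) φ (t, x₂) ^ 2) := by
  obtain ⟨hUp, -, hφh, hUpK, -, hφhK, -⟩ := hreg
  set p : P2 := (t, 0, x₂)
  have hUp0 : ‖Up p‖ ≤ K := by simpa using hUpK 0 (by norm_num) p
  have hK : 0 ≤ K := (norm_nonneg _).trans hUp0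
  have hUp1 (i : Fin 6) : |D (0, 1, 0) Up p i| ≤ K := by
    refine (norm_le_pi_norm (D (0, 1, 0) Up p) i).trans ?_
    simpa [D, Prod.norm_def] using
      (fderiv ℝ Up p).le_of_opNorm_le (by simpa using hUpK 1 (by norm_num) p) (0, 1, 0)
  have hφh1 : |Db (0, 1) φh (t, x₂)| ≤ K := by
    simpa [Db, Prod.norm_def] using
      (fderiv ℝ φh _).le_of_opNorm_le (by simpa using hφhK 1 (by norm_num) (t, x₂)) (0, 1)
  have hUp2 : |Up p 2| ≤ K := (norm_le_pi_norm _ 2).trans hUp0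
  have hcoef : |D (0, 1, 0) Up p 1 - Db (0, 1) φh (t, x₂) * D (0, 1, 0) Up p 2| ≤ K + K * K :=
    (abs_sub _ _).trans (add_le_add (hUp1 1)
      ((abs_mul _ _).trans_le (mul_le_mul hφh1 (hUp1 2) (abs_nonneg _) hK)))
  have hUd12 : Ud p 1 ^ 2 + Ud p 2 ^ 2 ≤ ∑ i, Ud p i ^ 2 := by
    rw [← Finset.sum_pair (f := fun i => Ud p i ^ 2) (by decide : (1 : Fin 6) ≠ 2)]
    exact Finset.sum_le_sum_of_subset_of_nonneg (Finset.subset_univ _) fun i _ _ => sq_nonneg _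
  rw [Db_time_eq_of_boundary_condition hχ (hφh.of_le (WithTop.coe_le_coe.mpr le_top))
    (hUp.differentiable (by simp) p) hbc]
  refine (sq_sub_sub_add_le hφh1 hUp2 hcoef).trans ?_
  gcongr

end FrontBound

lemma sqrt_add_le_add_sqrt (a b : ℝ) : √(a + b) ≤ √a + √b := by
  rcases le_total a 0 with ha | ha
  · rw [Real.sqrt_eq_zero_of_nonpos ha, zero_add]
    exact Real.sqrt_le_sqrt (by linarith)
  rcases le_total b 0 with hb | hb
  · rw [Real.sqrt_eq_zero_of_nonpos hb, add_zero]
    exact Real.sqrt_le_sqrt (by linarith)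
  rw [Real.sqrt_le_left (by positivity)]
  nlinarith [Real.sq_sqrt ha, Real.sq_sqrt hb, Real.sqrt_nonneg a, Real.sqrt_nonneg b]

lemma sqrt_le_sqrt_mul_add_sqrt {x M a b c d : ℝ} (hM : 0 ≤ M) (h : x ≤ M * (a + b + c + d)) :
    √x ≤ √M * (√a + √b + √c + √d) :=
  calc √x ≤ √(M * (a + b + c + d)) := Real.sqrt_le_sqrt h
    _ = √M * √(a + b + c + d) := Real.sqrt_mul hM _
    _ ≤ √M * (√a + √b + √c + √d) := by
      gcongr
      refine (sqrt_add_le_add_sqrt _ _).trans (add_le_add_left ?_ _)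
      refine (sqrt_add_le_add_sqrt _ _).trans (add_le_add_left ?_ _)
      exact sqrt_add_le_add_sqrt _ _

theorem front_time_derivative_estimate_general (K : ℝ) :
    ∃ C : ℝ, 0 < C ∧
      ∀ (T : ℝ) (χ : ℝ → ℝ) (φh : ℝ × ℝ → ℝ) (Up Um : P2 → Fin 6 → ℝ),
        ChiHyp χ → StateReg K Up Um φh →
      ∀ (Ud : P2 → Fin 6 → ℝ) (φ : ℝ × ℝ → ℝ),
        ContDiff ℝ 1 Ud → ContDiff ℝ 1 φ →
        (∀ p : P2, p.1 < 0 → Ud p = 0) → (∀ q : ℝ × ℝ, q.1 < 0 → φ q = 0) →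
        -- the boundary condition v_N⁺ = ∂₀φ − φ∂₁v̂_N⁺ on ∂Ω_T
        (∀ t x₂ : ℝ, t ≤ T →
          vN χ φh 1 Ud (t, 0, x₂) =
            (Db (1, 0) φ (t, x₂) + Up (t, 0, x₂) 2 * Db (0, 1) φ (t, x₂))
              - φ (t, x₂) * D (0, 1, 0) (vN χ φh 1 Up) (t, 0, x₂)) →
        -- finiteness of the norms involved
        MeasureTheory.IntegrableOn (fun p => ∑ i, (Ud p i) ^ 2) (ΩT T) →
        MeasureTheory.IntegrableOn
          (fun p => ∑ i, (D (0, 1, 0) Ud p i) ^ 2) (ΩT T) →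
        MeasureTheory.IntegrableOn (fun q => (φ q) ^ 2) (bT T) →
        MeasureTheory.IntegrableOn (fun q => (Db (0, 1) φ q) ^ 2) (bT T) →
        MeasureTheory.IntegrableOn (fun q => (Db (1, 0) φ q) ^ 2) (bT T) →
        Real.sqrt (L2B T (Db (1, 0) φ)) ≤
          C * (Real.sqrt (L2V (ΩT T) Ud) + Real.sqrt (L2V (ΩT T) (D (0, 1, 0) Ud))
            + Real.sqrt (L2B T φ) + Real.sqrt (L2B T (Db (0, 1) φ))) := by
  set M := 4 * (1 + K ^ 2 + (K + K * K) ^ 2)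
  have hM : 0 < M := by positivity
  refine ⟨√M, Real.sqrt_pos.mpr hM, ?_⟩
  intro T χ φh Up Um hχ hreg Ud φ hUd _ _ _ hbc hU hDU hφ hDφ hDtφ
  obtain ⟨-, -, hχ_one, -⟩ := hχ
  obtain ⟨htrace, htrace_le⟩ := integrableOn_bT_trace_and_integral_le hUd hU hDU
  have hbound : ∀ q ∈ bT T, Db (1, 0) φ q ^ 2 ≤
      M * (∑ i, Ud (q.1, 0, q.2) i ^ 2 + φ q ^ 2 + Db (0, 1) φ q ^ 2) := fun q hq =>
    sq_Db_time_le_of_boundary_condition hχ_one hreg (hbc q.1 q.2 hq)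
  have hint₁ : IntegrableOn (fun q => ∑ i, Ud (q.1, 0, q.2) i ^ 2 + φ q ^ 2) (bT T) :=
    htrace.add hφ
  have hint₂ : IntegrableOn
      (fun q => ∑ i, Ud (q.1, 0, q.2) i ^ 2 + φ q ^ 2 + Db (0, 1) φ q ^ 2) (bT T) :=
    hint₁.add hDφ
  refine sqrt_le_sqrt_mul_add_sqrt hM.le ?_
  calc L2B T (Db (1, 0) φ)
      ≤ ∫ q in bT T, M * (∑ i, Ud (q.1, 0, q.2) i ^ 2 + φ q ^ 2 + Db (0, 1) φ q ^ 2) :=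
        setIntegral_mono_on hDtφ (hint₂.const_mul M) (measurableSet_bT T) hbound
    _ ≤ M * (L2V (ΩT T) Ud + L2V (ΩT T) (D (0, 1, 0) Ud) + L2B T φ + L2B T (Db (0, 1) φ)) := by
        rw [integral_const_mul, integral_add hint₁ hDφ, integral_add htrace hφ]
        gcongr
        exacts [htrace_le, le_rfl, le_rfl]

/-- **Estimate of `∂ₜφ` from the boundary condition** (inequality (4.29)).
There is `C = C(K) > 0` such that whenever `U⁺` and `φ` are `C¹`, vanish in
the past, satisfy the boundary condition `v_N⁺ = ∂₀φ − φ∂₁v̂_N⁺` on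
`∂Ω_T`, and all norms below are finite, then
`‖∂ₜφ‖_{L²(∂Ω_T)} ≤ C(‖U⁺‖_{L²(Ω_T)} + ‖∂₁U⁺‖_{L²(Ω_T)}
   + ‖φ‖_{L²(∂Ω_T)} + ‖∂₂φ‖_{L²(∂Ω_T)})`. -/
theorem front_time_derivative_estimate (K : ℝ) (hK : 0 < K) :
    ∃ C : ℝ, 0 < C ∧
      ∀ (T : ℝ) (χ : ℝ → ℝ) (φh : ℝ × ℝ → ℝ) (Up Um : P2 → Fin 6 → ℝ),
        ChiHyp χ → StateReg K Up Um φh →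
      ∀ (Ud : P2 → Fin 6 → ℝ) (φ : ℝ × ℝ → ℝ),
        ContDiff ℝ 1 Ud → ContDiff ℝ 1 φ →
        (∀ p : P2, p.1 < 0 → Ud p = 0) → (∀ q : ℝ × ℝ, q.1 < 0 → φ q = 0) →
        -- the boundary condition v_N⁺ = ∂₀φ − φ∂₁v̂_N⁺ on ∂Ω_T
        (∀ t x₂ : ℝ, t ≤ T →
          vN χ φh 1 Ud (t, 0, x₂) =
            (Db (1, 0) φ (t, x₂) + Up (t, 0, x₂) 2 * Db (0, 1) φ (t, x₂))
              - φ (t, x₂) * D (0, 1, 0) (vN χ φh 1 Up) (t, 0, x₂)) →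
        -- finiteness of the norms involved
        MeasureTheory.IntegrableOn (fun p => ∑ i, (Ud p i) ^ 2) (ΩT T) →
        MeasureTheory.IntegrableOn
          (fun p => ∑ i, (D (0, 1, 0) Ud p i) ^ 2) (ΩT T) →
        MeasureTheory.IntegrableOn (fun q => (φ q) ^ 2) (bT T) →
        MeasureTheory.IntegrableOn (fun q => (Db (0, 1) φ q) ^ 2) (bT T) →
        MeasureTheory.IntegrableOn (fun q => (Db (1, 0) φ q) ^ 2) (bT T) →
        Real.sqrt (L2B T (Db (1, 0) φ)) ≤
          C * (Real.sqrt (L2V (ΩT T) Ud) + Real.sqrt (L2V (ΩT T) (D (0, 1, 0) Ud))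
            + Real.sqrt (L2B T φ) + Real.sqrt (L2B T (Db (0, 1) φ))) :=
  front_time_derivative_estimate_general K

end
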